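/- arXiv:2402.17995 — 4 statements merged into one kernel-verified Lean document; each statement's English description precedes it below -/
import Mathlib

section
/- Fix an integer k ≥ 1. There exist constants c_k > 0 and C_k > 0 such that the following holds for every ε ∈ (0, c_k) and every integer N ≥ c_k^{−1}: if P(n) = Σ_{i=0}^{k} α_i·binom(n,i) is a polynomial with real coefficients α_0,…,α_k such that ‖P(n) − P(n')‖_{ℝ/ℤ} ≤ ε for all n, n' ∈ [N], then ‖P‖_{C^∞[N]} ≤ C_k · ε. -/
/-!
Induction on the degree `k`. For every step `h ≤ N / 2`, Vandermonde's identity makes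
`n ↦ P (n + h) - P n` a binomial polynomial of degree `k - 1` with top coefficient `h * α k`,
and it is `2 * ε`-close to an integer on `[1, N / 2]`; by induction `‖h • α k‖ ≪ ε / N ^ (k - 1)`
for all `h ≤ N / 2`, and the Vinogradov-type lemma (if `‖m • x‖ ≤ δ ≤ 1 / 4` for all `m ≤ M`
then `M * ‖x‖ ≤ δ`) gives `N ^ k * ‖α k‖ ≪ ε`. Removing the top term `α k * n.choose k` moves
every value by at most `N ^ k * ‖α k‖` modulo `1`, so induction bounds the lower coefficients.
Subtracting `P 1` reduces the hypothesis on differences `P n - P n'` to one on values.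
-/

open Finset

def binomPoly (k : ℕ) (α : ℕ → ℝ) (n : ℕ) : ℝ :=
  ∑ i ∈ range (k + 1), α i * (n.choose i : ℝ)

theorem binomPoly_succ (k : ℕ) (α : ℕ → ℝ) (n : ℕ) :
    binomPoly (k + 1) α n = binomPoly k α n + α (k + 1) * (n.choose (k + 1) : ℝ) :=
  sum_range_succ _ _

theorem binomPoly_update_zero_sub (k : ℕ) (α : ℕ → ℝ) (c : ℝ) (n : ℕ) :
    binomPoly k (Function.update α 0 (α 0 - c)) n = binomPoly k α n - c := by
  simp only [binomPoly, sum_range_succ', Nat.choose_zero_right, Nat.cast_one, mul_one,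
    Function.update_self, ne_eq, Nat.succ_ne_zero, not_false_eq_true, Function.update_of_ne]
  ring

theorem binomPoly_add_sub (k : ℕ) (α : ℕ → ℝ) (n h : ℕ) :
    binomPoly (k + 1) α (n + h) - binomPoly (k + 1) α n =
      binomPoly k (fun p ↦ ∑ j ∈ Ioc p (k + 1), α j * (h.choose (j - p) : ℝ)) n := by
  have vandermonde (j : ℕ) : ((n + h).choose j : ℝ) - n.choose j =
      ∑ p ∈ range j, (n.choose p : ℝ) * h.choose (j - p) := by
    rw [Nat.add_choose_eq, Nat.sum_antidiagonal_eq_sum_range_succ_mk, sum_range_succ]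
    push_cast
    simp
  simp only [binomPoly, ← sum_sub_distrib, ← mul_sub, vandermonde, mul_sum, sum_mul]
  rw [sum_comm' (t' := range (k + 1)) (s' := fun p ↦ Ioc p (k + 1))]
  · exact sum_congr rfl fun p _ ↦ sum_congr rfl fun j _ ↦ by ring
  · intro j p
    simp only [mem_range, mem_Ioc]
    omega

theorem UnitAddCircle.coe_mul_natCast (x : ℝ) (m : ℕ) :
    ((x * m : ℝ) : UnitAddCircle) = m • (x : UnitAddCircle) := by
  rw [mul_comm, ← nsmul_eq_mul, AddCircle.coe_nsmul]

theorem UnitAddCircle.norm_nsmul_eq_mul_norm {x : UnitAddCircle} {m : ℕ}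
    (h : m * ‖x‖ ≤ 1 / 2) : ‖m • x‖ = m * ‖x‖ := by
  obtain ⟨y, rfl⟩ := QuotientAddGroup.mk_surjective x
  change m * ‖(y : UnitAddCircle)‖ ≤ 1 / 2 at h
  change ‖m • (y : UnitAddCircle)‖ = m * ‖(y : UnitAddCircle)‖
  set s := y - round y
  have hs : (s : UnitAddCircle) = y := by
    rw [AddCircle.coe_sub, sub_eq_self, AddCircle.coe_eq_zero_iff]
    exact ⟨round y, by simp⟩
  have hsm : |s * m| = m * ‖(y : UnitAddCircle)‖ := by
    rw [abs_mul, Nat.abs_cast, UnitAddCircle.norm_eq, mul_comm]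
  calc ‖m • (y : UnitAddCircle)‖ = ‖((s * m : ℝ) : UnitAddCircle)‖ := by
        rw [coe_mul_natCast, hs]
    _ = m * ‖(y : UnitAddCircle)‖ := by
        rw [(AddCircle.norm_coe_eq_abs_iff 1 one_ne_zero).2 (by simpa [hsm] using h), hsm]

theorem UnitAddCircle.mul_norm_le_of_forall_nsmul_norm_le {x : UnitAddCircle} {δ : ℝ} {M : ℕ}
    (hM : 1 ≤ M) (hδ : δ ≤ 1 / 4) (h : ∀ m ∈ Icc 1 M, ‖m • x‖ ≤ δ) : M * ‖x‖ ≤ δ := by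
  induction M, hM using Nat.le_induction with
  | base => simpa using h 1 (by simp)
  | succ m hm ih =>
    -- `(m + 1) * ‖x‖ ≤ 2 * δ ≤ 1 / 2`, so `(m + 1) • x` does not wrap around the circle
    have hm' : m * ‖x‖ ≤ δ := ih fun i hi ↦ h i (by simp only [mem_Icc] at hi ⊢; omega)
    have hx : ‖x‖ ≤ m * ‖x‖ := le_mul_of_one_le_left (norm_nonneg x) (by exact_mod_cast hm)
    have hsmall : ((m + 1 : ℕ) : ℝ) * ‖x‖ ≤ 1 / 2 := by push_cast; linarith
    rw [← norm_nsmul_eq_mul_norm hsmall]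
    exact h (m + 1) (by simp)

theorem exists_pow_mul_norm_top_coeff_le (k : ℕ) :
    ∃ C : ℝ, 1 ≤ C ∧ ∀ (ε : ℝ) (N : ℕ) (α : ℕ → ℝ), C * ε < 1 → C ≤ N →
      (∀ n ∈ Icc 1 N, ‖(binomPoly k α n : UnitAddCircle)‖ ≤ ε) →
        N ^ k * ‖(α k : UnitAddCircle)‖ ≤ C * ε := by
  induction k with
  | zero =>
    refine ⟨1, le_rfl, fun ε N α _ hN hP ↦ ?_⟩
    simpa [binomPoly] using hP 1 (mem_Icc.2 ⟨le_rfl, by exact_mod_cast hN⟩)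
  | succ k ih =>
    obtain ⟨C, hC, hT⟩ := ih
    have h3 : (1 : ℝ) ≤ 3 ^ (k + 1) := one_le_pow₀ (by norm_num)
    refine ⟨8 * 3 ^ (k + 1) * C, by nlinarith, fun ε N α hε hN hP ↦ ?_⟩
    have hN1 : 1 ≤ N := by exact_mod_cast (by nlinarith : (1 : ℝ) ≤ N)
    have hε0 : 0 ≤ ε := (norm_nonneg _).trans (hP 1 (by simp [hN1]))
    set M := N / 2
    have hM : 1 ≤ M := by
      have : 8 ≤ N := by exact_mod_cast (by nlinarith : (8 : ℝ) ≤ N)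
      omega
    have hNM : (N : ℝ) ≤ 3 * M := by exact_mod_cast (by omega : N ≤ 3 * M)
    have hCM : C ≤ M := by nlinarith
    have hCε : 0 ≤ C * ε := mul_nonneg (by linarith) hε0
    have hstep : ∀ h ∈ Icc 1 M,
        (M : ℝ) ^ k * ‖h • (α (k + 1) : UnitAddCircle)‖ ≤ C * (2 * ε) := by
      intro h hh
      simp only [mem_Icc] at hh
      have := hT (2 * ε) M (fun p ↦ ∑ j ∈ Ioc p (k + 1), α j * (h.choose (j - p) : ℝ))
        (by nlinarith) hCM fun n hn ↦ ?_
      · simpa [UnitAddCircle.coe_mul_natCast] using this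
      · simp only [mem_Icc] at hn
        rw [← binomPoly_add_sub, AddCircle.coe_sub]
        refine (norm_sub_le _ _).trans ?_
        linarith [hP (n + h) (mem_Icc.2 ⟨by omega, by omega⟩),
          hP n (mem_Icc.2 ⟨hn.1, by omega⟩)]
    have hMk : (0 : ℝ) < M ^ k := by positivity
    have hδ : C * (2 * ε) / M ^ k ≤ 1 / 4 := by
      refine (div_le_self (by positivity) (one_le_pow₀ (by exact_mod_cast hM))).trans ?_
      nlinarith
    have hvin := UnitAddCircle.mul_norm_le_of_forall_nsmul_norm_le hM hδ
      fun h hh ↦ (le_div_iff₀' hMk).2 (hstep h hh)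
    calc (N : ℝ) ^ (k + 1) * ‖(α (k + 1) : UnitAddCircle)‖
        ≤ (3 * M) ^ (k + 1) * ‖(α (k + 1) : UnitAddCircle)‖ := by gcongr
      _ = 3 ^ (k + 1) * M ^ k * (M * ‖(α (k + 1) : UnitAddCircle)‖) := by ring
      _ ≤ 3 ^ (k + 1) * M ^ k * (C * (2 * ε) / M ^ k) := by gcongr
      _ ≤ 8 * 3 ^ (k + 1) * C * ε := by
        rw [mul_assoc, mul_div_cancel₀ _ hMk.ne']
        nlinarith

theorem exists_pow_mul_norm_coeff_le (k : ℕ) :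
    ∃ C : ℝ, 1 ≤ C ∧ ∀ (ε : ℝ) (N : ℕ) (α : ℕ → ℝ), C * ε < 1 → C ≤ N →
      (∀ n ∈ Icc 1 N, ‖(binomPoly k α n : UnitAddCircle)‖ ≤ ε) →
        ∀ i ≤ k, N ^ i * ‖(α i : UnitAddCircle)‖ ≤ C * ε := by
  induction k with
  | zero =>
    obtain ⟨C, hC, hT⟩ := exists_pow_mul_norm_top_coeff_le 0
    refine ⟨C, hC, fun ε N α hε hN hP i hi ↦ ?_⟩
    obtain rfl : i = 0 := by omega
    exact hT ε N α hε hN hP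
  | succ k ih =>
    obtain ⟨C₁, hC₁, hTop⟩ := exists_pow_mul_norm_top_coeff_le (k + 1)
    obtain ⟨C₂, hC₂, hLow⟩ := ih
    refine ⟨2 * C₁ * C₂, by nlinarith, fun ε N α hε hN hP i hi ↦ ?_⟩
    have hN1 : 1 ≤ N := by exact_mod_cast (by nlinarith : (1 : ℝ) ≤ N)
    have hε0 : 0 ≤ ε := (norm_nonneg _).trans (hP 1 (by simp [hN1]))
    have hC₁C : C₁ ≤ 2 * C₁ * C₂ := by nlinarith
    have hC₂C : C₂ * (1 + C₁) ≤ 2 * C₁ * C₂ := by nlinarith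
    have htop := hTop ε N α (by nlinarith) (hC₁C.trans hN) hP
    rcases (show i = k + 1 ∨ i ≤ k by omega) with rfl | hik
    · exact htop.trans (by gcongr)
    have hpeel : ∀ n ∈ Icc 1 N, ‖(binomPoly k α n : UnitAddCircle)‖ ≤ (1 + C₁) * ε := by
      intro n hn
      have hchoose : (n.choose (k + 1) : ℝ) ≤ N ^ (k + 1) := by
        exact_mod_cast (Nat.choose_le_pow n (k + 1)).trans
          (Nat.pow_le_pow_left (mem_Icc.1 hn).2 _)
      rw [← add_sub_cancel_right (binomPoly k α n) (α (k + 1) * (n.choose (k + 1) : ℝ)),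
        ← binomPoly_succ, AddCircle.coe_sub, UnitAddCircle.coe_mul_natCast]
      calc _ ≤ _ := norm_sub_le _ _
        _ ≤ ε + N ^ (k + 1) * ‖(α (k + 1) : UnitAddCircle)‖ := by
          gcongr
          · exact hP n hn
          · exact (norm_nsmul_le ..).trans (by gcongr)
        _ ≤ (1 + C₁) * ε := by linarith
    calc (N : ℝ) ^ i * ‖(α i : UnitAddCircle)‖ ≤ C₂ * ((1 + C₁) * ε) :=
          hLow _ N α (by nlinarith) (by nlinarith) hpeel i hik
      _ ≤ 2 * C₁ * C₂ * ε := by rw [← mul_assoc]; gcongr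

theorem smoothness_norm_of_small_fractional_parts_general (k : ℕ) :
    ∃ c C : ℝ, 0 < c ∧ 0 < C ∧
      ∀ ε : ℝ, 0 < ε → ε < c →
        ∀ N : ℕ, c⁻¹ ≤ (N : ℝ) →
          ∀ α : ℕ → ℝ,
            (∀ n ∈ Finset.Icc 1 N, ∀ n' ∈ Finset.Icc 1 N,
              |((∑ i ∈ Finset.range (k + 1), α i * (n.choose i : ℝ)) -
                  (∑ i ∈ Finset.range (k + 1), α i * (n'.choose i : ℝ))) -
                round ((∑ i ∈ Finset.range (k + 1), α i * (n.choose i : ℝ)) -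
                  (∑ i ∈ Finset.range (k + 1), α i * (n'.choose i : ℝ)))| ≤ ε) →
            ∀ i : ℕ, 1 ≤ i → i ≤ k →
              (N : ℝ) ^ i * |α i - round (α i)| ≤ C * ε := by
  obtain ⟨C, hC, hbound⟩ := exists_pow_mul_norm_coeff_le k
  have hC0 : 0 < C := by linarith
  refine ⟨C⁻¹, C, inv_pos.2 hC0, hC0, fun ε _ hεc N hN α hα i hi hik ↦ ?_⟩
  rw [inv_inv] at hN
  have hN1 : 1 ∈ Icc 1 N := mem_Icc.2 ⟨le_rfl, by exact_mod_cast hC.trans hN⟩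
  have hCε : C * ε < 1 := by simpa [hC0.ne'] using mul_lt_mul_of_pos_left hεc hC0
  have key := hbound ε N (Function.update α 0 (α 0 - binomPoly k α 1)) hCε hN
    (fun n hn ↦ by
      rw [binomPoly_update_zero_sub, UnitAddCircle.norm_eq]
      exact hα n hn 1 hN1) i hik
  rwa [Function.update_of_ne (by omega), UnitAddCircle.norm_eq] at key

/-- **Polynomials nearly constant mod 1 have small smoothness norm (Lemma 2.3).**
Fix `k ≥ 1`. There exist `c, C > 0` such that for every `ε ∈ (0, c)` and every integer
`N ≥ c⁻¹`: if `P(n) = Σ_{i=0}^k α_i · binom(n, i)` satisfies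
`‖P(n) − P(n')‖_{ℝ/ℤ} ≤ ε` for all `n, n' ∈ [N]`, then
`‖P‖_{C^∞[N]} = max_{1 ≤ i ≤ k} N^i · ‖α_i‖_{ℝ/ℤ} ≤ C · ε`. -/
theorem smoothness_norm_of_small_fractional_parts (k : ℕ) (hk : 1 ≤ k) :
    ∃ c C : ℝ, 0 < c ∧ 0 < C ∧
      ∀ ε : ℝ, 0 < ε → ε < c →
        ∀ N : ℕ, c⁻¹ ≤ (N : ℝ) →
          ∀ α : ℕ → ℝ,
            (∀ n ∈ Finset.Icc 1 N, ∀ n' ∈ Finset.Icc 1 N,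
              |((∑ i ∈ Finset.range (k + 1), α i * (n.choose i : ℝ)) -
                  (∑ i ∈ Finset.range (k + 1), α i * (n'.choose i : ℝ))) -
                round ((∑ i ∈ Finset.range (k + 1), α i * (n.choose i : ℝ)) -
                  (∑ i ∈ Finset.range (k + 1), α i * (n'.choose i : ℝ)))| ≤ ε) →
            ∀ i : ℕ, 1 ≤ i → i ≤ k →
              (N : ℝ) ^ i * |α i - round (α i)| ≤ C * ε :=
  smoothness_norm_of_small_fractional_parts_general k
end

section
/- There exists an absolute constant C > 0 such that the following holds: for every integer N ≥ 1, every function g : [N] → ℝ, and every integer K ≥ 1, there exists t ∈ [0, 1/K) such that the factor B_{g−t,K} is C-regular, i.e., sup_{r>0} (1/(2r))·(1/N)·|{x ∈ [N] : ‖K·(g(x) − t)‖_{ℝ/ℤ} ≤ r}| ≤ C. -/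
/-!
After rescaling by `K`, it suffices to find `θ ∈ [0,1)` such that every arc of radius `r`
around `θ` in `ℝ/ℤ` contains at most `O(r N)` of the points `K g(x) mod 1`. Unrolling the
circle, such an arc is covered by the interval `[θ - r, θ + r]` applied to the `3N` real points
`fract (K g x) + j`, `j ∈ {-1, 0, 1}`. A good `θ` then exists by a finite Hardy–Littlewood
maximal inequality: if every `θ ∈ [0,1)` saw more than `20 r M` of `M` points in some
`[θ - r, θ + r]` with `r ≤ 1/20`, the Vitali covering lemma would extract disjoint such
intervals of total radius at most `1/20` whose fourfold enlargements still cover `[0,1)`,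
which is impossible since `8/20 < 1`.
-/

open Set Metric MeasureTheory
open scoped Finset

theorem Set.PairwiseDisjoint.finite_of_forall_exists_mem {α β ι : Type*} {u : Set β}
    {B : β → Set α} (hu : u.PairwiseDisjoint B) {s : Set ι} (hs : s.Finite) {y : ι → α}
    (hmeet : ∀ b ∈ u, ∃ i ∈ s, y i ∈ B b) : u.Finite := by
  rcases u.eq_empty_or_nonempty with rfl | ⟨b, hb⟩
  · exact finite_empty
  have : Nonempty ι := ⟨(hmeet b hb).choose⟩
  choose! i hi hyi using hmeet
  exact hs.of_injOn hi fun b hb c hc hbc => hu.elim_set hb hc _ (hyi b hb) (hbc ▸ hyi c hc)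

theorem volume_le_ofReal_sum_of_subset_biUnion_closedBall {ι : Type*} {S : Set ℝ}
    {U : Finset ι} {c ρ : ι → ℝ} (hρ : ∀ b ∈ U, 0 ≤ ρ b)
    (hS : S ⊆ ⋃ b ∈ U, closedBall (c b) (ρ b)) :
    volume S ≤ ENNReal.ofReal (2 * ∑ b ∈ U, ρ b) :=
  calc volume S ≤ ∑ b ∈ U, volume (closedBall (c b) (ρ b)) :=
        (measure_mono hS).trans (measure_biUnion_finset_le U _)
    _ = ENNReal.ofReal (2 * ∑ b ∈ U, ρ b) := by
        simp_rw [Real.volume_closedBall, Finset.mul_sum]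
        rw [ENNReal.ofReal_sum_of_nonneg fun b hb => by linarith [hρ b hb]]

section FiniteMaximal

variable {ι : Type*} (s : Finset ι) (y : ι → ℝ)

theorem sum_card_filter_abs_sub_le_card {U : Finset ℝ} {ρ : ℝ → ℝ}
    (hU : (U : Set ℝ).PairwiseDisjoint fun b => closedBall b (ρ b)) :
    ∑ b ∈ U, #{i ∈ s | |y i - b| ≤ ρ b} ≤ #s := by
  classical
  rw [← Finset.card_biUnion]
  · exact Finset.card_le_card (Finset.biUnion_subset.2 fun _ _ => Finset.filter_subset _ _)
  · intro b hb c hc hbc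
    refine Finset.disjoint_left.2 fun i hib hic => ?_
    simp only [Finset.mem_filter, ← Real.dist_eq, ← mem_closedBall] at hib hic
    exact Set.disjoint_left.1 (hU hb hc hbc) hib.2 hic.2

def crowdedPoints : Set ℝ :=
  {θ | ∃ r ∈ Ioc (0 : ℝ) (1 / 20), 20 * r * #s < (#{i ∈ s | |y i - θ| ≤ r} : ℝ)}

theorem not_Ico_subset_crowdedPoints : ¬ Ico (0 : ℝ) 1 ⊆ crowdedPoints s y := by
  intro hcrowded
  choose! ρ hρ hρcount using fun θ (hθ : θ ∈ crowdedPoints s y) => hθ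
  obtain ⟨u, hu, hdisj, hcover⟩ :=
    Vitali.exists_disjoint_subfamily_covering_enlargement_closedBall (crowdedPoints s y) id ρ
      (1 / 20) (fun θ hθ => (hρ θ hθ).2) 4 (by norm_num)
  have hcard_pos : ∀ θ ∈ crowdedPoints s y, 0 < #{i ∈ s | |y i - θ| ≤ ρ θ} :=
    fun θ hθ => by
      have hpos := (hρ θ hθ).1
      exact_mod_cast (by positivity : (0 : ℝ) ≤ 20 * ρ θ * #s).trans_lt (hρcount θ hθ)
  have hs : (0 : ℝ) < #s := by
    have := hcard_pos 0 (hcrowded (by norm_num))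
    exact_mod_cast this.trans_le (Finset.card_filter_le _ _)
  have hfin : u.Finite := Set.PairwiseDisjoint.finite_of_forall_exists_mem hdisj s.finite_toSet
    fun b hb => by
      obtain ⟨i, hi⟩ := Finset.card_pos.1 (hcard_pos b (hu hb))
      simp only [Finset.mem_filter, ← Real.dist_eq] at hi
      exact ⟨i, hi.1, hi.2⟩
  set U := hfin.toFinset
  have hsum : ∑ b ∈ U, ρ b ≤ 1 / 20 := by
    have : ∑ b ∈ U, 20 * ρ b * #s ≤ #s :=
      calc ∑ b ∈ U, 20 * ρ b * #s ≤ ∑ b ∈ U, (#{i ∈ s | |y i - b| ≤ ρ b} : ℝ) :=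
            Finset.sum_le_sum fun b hb => (hρcount b (hu (hfin.mem_toFinset.1 hb))).le
        _ ≤ #s := by
            exact_mod_cast sum_card_filter_abs_sub_le_card s y (by simpa [U] using hdisj)
    rw [← Finset.sum_mul, ← Finset.mul_sum] at this
    nlinarith
  have hcover' : Ico (0 : ℝ) 1 ⊆ ⋃ b ∈ U, closedBall b (4 * ρ b) := fun θ hθ => by
    obtain ⟨b, hb, hsub⟩ := hcover θ (hcrowded hθ)
    exact mem_biUnion (hfin.mem_toFinset.2 hb)
      (hsub (mem_closedBall_self (hρ θ (hcrowded hθ)).1.le))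
  have hρU : ∀ b ∈ U, 0 < ρ b := fun b hb => (hρ b (hu (hfin.mem_toFinset.1 hb))).1
  have hvol := volume_le_ofReal_sum_of_subset_biUnion_closedBall
    (fun b hb => by linarith [hρU b hb]) hcover'
  rw [Real.volume_Ico, ← Finset.mul_sum,
    ENNReal.ofReal_le_ofReal_iff (by linarith [Finset.sum_nonneg fun b hb => (hρU b hb).le])]
    at hvol
  linarith

theorem exists_mem_Ico_forall_card_filter_abs_sub_le :
    ∃ θ ∈ Ico (0 : ℝ) 1, ∀ r > 0,
      (#{i ∈ s | |y i - θ| ≤ r} : ℝ) ≤ 20 * r * #s := by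
  obtain ⟨θ, hθ, hsparse⟩ := not_subset.1 (not_Ico_subset_crowdedPoints s y)
  refine ⟨θ, hθ, fun r hr => ?_⟩
  by_cases hr' : r ≤ 1 / 20
  · exact not_lt.1 fun h => hsparse ⟨r, ⟨hr, hr'⟩, h⟩
  · calc (#{i ∈ s | |y i - θ| ≤ r} : ℝ) ≤ #s := mod_cast Finset.card_filter_le _ _
      _ ≤ 20 * r * #s := le_mul_of_one_le_left (by positivity) (by linarith)

end FiniteMaximal

theorem exists_mem_Icc_abs_fract_add_sub_eq_abs_sub_round (a : ℝ) {θ : ℝ}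
    (hθ : θ ∈ Ico (0 : ℝ) 1) :
    ∃ j ∈ Finset.Icc (-1 : ℤ) 1, |Int.fract a + j - θ| = |a - θ - round (a - θ)| := by
  have hfract := Int.fract_nonneg a
  have hfract' := Int.fract_lt_one a
  refine ⟨-round (Int.fract a - θ), ?_, ?_⟩
  · have hlower : -1 ≤ round (Int.fract a - θ) := by
      rw [round_eq, Int.le_floor]; push_cast; linarith [hθ.2]
    have hupper : round (Int.fract a - θ) ≤ 1 := by
      rw [round_eq, Int.floor_le_iff]; push_cast; linarith [hθ.1]
    rw [Finset.mem_Icc]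
    omega
  · have hsplit : a - θ = Int.fract a - θ + ⌊a⌋ := by rw [Int.fract]; ring
    rw [hsplit, round_add_intCast]
    push_cast
    ring_nf

theorem card_filter_abs_sub_round_le {α : Type*} (S : Finset α) (a : α → ℝ) {θ : ℝ}
    (hθ : θ ∈ Ico (0 : ℝ) 1) (r : ℝ) :
    #{x ∈ S | |a x - θ - round (a x - θ)| ≤ r} ≤
      #{p ∈ S ×ˢ Finset.Icc (-1 : ℤ) 1 | |Int.fract (a p.1) + p.2 - θ| ≤ r} := by
  choose j hj hjeq using fun x => exists_mem_Icc_abs_fract_add_sub_eq_abs_sub_round (a x) hθ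
  refine Finset.card_le_card_of_injOn (fun x => (x, j x)) (fun x hx => ?_)
    fun x _ y _ hxy => congrArg Prod.fst hxy
  simp only [Finset.coe_filter, mem_ofPred_eq, Finset.mem_product] at hx ⊢
  exact ⟨⟨hx.1, hj x⟩, (hjeq x).trans_le hx.2⟩

theorem exists_mem_Ico_forall_card_filter_abs_sub_round_le {α : Type*} (S : Finset α)
    (a : α → ℝ) :
    ∃ θ ∈ Ico (0 : ℝ) 1, ∀ r > 0,
      (#{x ∈ S | |a x - θ - round (a x - θ)| ≤ r} : ℝ) ≤ 60 * r * #S := by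
  obtain ⟨θ, hθ, hcount⟩ := exists_mem_Ico_forall_card_filter_abs_sub_le
    (S ×ˢ Finset.Icc (-1 : ℤ) 1) fun p => Int.fract (a p.1) + p.2
  refine ⟨θ, hθ, fun r hr => ?_⟩
  calc (#{x ∈ S | |a x - θ - round (a x - θ)| ≤ r} : ℝ)
      ≤ #{p ∈ S ×ˢ Finset.Icc (-1 : ℤ) 1 | |Int.fract (a p.1) + p.2 - θ| ≤ r} := by
        exact_mod_cast card_filter_abs_sub_round_le S a hθ r
    _ ≤ 20 * r * #(S ×ˢ Finset.Icc (-1 : ℤ) 1) := hcount r hr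
    _ = 60 * r * #S := by
        rw [Finset.card_product, Int.card_Icc, show (1 + 1 - -1 : ℤ).toNat = 3 from rfl]
        push_cast
        ring

/-- **Existence of regular factors (Fact 3.7).**
There is an absolute constant `C > 0` such that for every `N ≥ 1`, every `g : [N] → ℝ`,
and every resolution `K ≥ 1`, there is a shift `t ∈ [0, 1/K)` making the factor
`B_{g−t,K}` `C`-regular: for every `r > 0`,
`(1/(2r)) · (1/N) · |{x ∈ [N] : ‖K·(g(x)−t)‖_{ℝ/ℤ} ≤ r}| ≤ C`, where
`‖x‖_{ℝ/ℤ} = |x - round x|` is the distance to the nearest integer. -/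
theorem exists_regular_shift :
    ∃ C : ℝ, 0 < C ∧
      ∀ N : ℕ, 1 ≤ N → ∀ g : ℕ → ℝ, ∀ K : ℕ, 1 ≤ K →
        ∃ t : ℝ, t ∈ Set.Ico (0 : ℝ) (1 / (K : ℝ)) ∧
          ∀ r : ℝ, 0 < r →
            (1 / (2 * r)) * (1 / (N : ℝ)) *
              (((Finset.Icc 1 N).filter
                (fun x => |(K : ℝ) * (g x - t) -
                  round ((K : ℝ) * (g x - t))| ≤ r)).card : ℝ) ≤ C := by
  refine ⟨30, by norm_num, fun N hN g K hK => ?_⟩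
  have hK0 : (0 : ℝ) < K := by exact_mod_cast hK
  have hN0 : (0 : ℝ) < N := by exact_mod_cast hN
  obtain ⟨θ, ⟨hθ0, hθ1⟩, hcount⟩ :=
    exists_mem_Ico_forall_card_filter_abs_sub_round_le (Finset.Icc 1 N) fun x => (K : ℝ) * g x
  refine ⟨θ / K, ⟨by positivity, div_lt_div_of_pos_right hθ1 hK0⟩, fun r hr => ?_⟩
  have hshift : ∀ x, (K : ℝ) * (g x - θ / K) = K * g x - θ := fun x => by field_simp
  simp_rw [hshift]
  calc 1 / (2 * r) * (1 / N) *
        (#{x ∈ Finset.Icc 1 N | |K * g x - θ - round (K * g x - θ)| ≤ r} : ℝ)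
      ≤ 1 / (2 * r) * (1 / N) * (60 * r * N) := by
        gcongr
        simpa using hcount r hr
    _ = 30 := by field_simp; ring
end

section
/- Let N ≥ 1 be an integer, let B and C be factors (partitions) of [N], let B' = B ∨ C be their join, and let f : [N] → ℝ. Then ‖Π_C(f − Π_B f)‖_{L¹[N]} ≤ (‖Π_{B'} f‖²_{L²[N]} − ‖Π_B f‖²_{L²[N]})^{1/2}; in particular ‖Π_{B'} f‖²_{L²[N]} ≥ ‖Π_B f‖²_{L²[N]}. -/
/-!
Write `J x = B x ∩ C x` for the join. Since `J` refines `B`, the projection `Π_B` is constant on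
the parts of `J`, so `∑ Π_B f · Π_J f = ∑ Π_B f · f = ∑ (Π_B f)²`; hence `Π_J f - Π_B f` is
orthogonal to `Π_B f` and `‖Π_J f - Π_B f‖₂² = ‖Π_J f‖₂² - ‖Π_B f‖₂²`. Since `J` also refines `C`,
`Π_C f = Π_C Π_J f`, so `Π_C (f - Π_B f) = Π_C (Π_J f - Π_B f)`; averaging is an `L¹`
contraction and `‖·‖₁ ≤ ‖·‖₂` on a probability space.
-/

open Finset

theorem Finset.mean_abs_le_sqrt_mean_sq {ι : Type*} (s : Finset ι) (g : ι → ℝ) :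
    (#s : ℝ)⁻¹ * ∑ i ∈ s, |g i| ≤ √((#s : ℝ)⁻¹ * ∑ i ∈ s, g i ^ 2) := by
  rw [Real.le_sqrt (by positivity) (by positivity)]
  simpa only [inv_mul_eq_div, sq_abs] using
    sum_div_card_sq_le_sum_sq_div_card (s := s) (f := fun i => |g i|)

variable {α : Type*}

/-- `P` encodes a partition of `T`: `P x` is the part containing `x`. -/
structure IsFactor (T : Finset α) (P : α → Finset α) : Prop where
  mem_self : ∀ x ∈ T, x ∈ P x
  subset : ∀ x ∈ T, P x ⊆ T
  eq_of_mem : ∀ x ∈ T, ∀ y ∈ P x, P y = P x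

/-- The projection `Π_P f`. -/
noncomputable def factorProj (P : α → Finset α) (f : α → ℝ) (x : α) : ℝ :=
  ((P x).card : ℝ)⁻¹ * ∑ y ∈ P x, f y

theorem factorProj_sub (P : α → Finset α) (f g : α → ℝ) (x : α) :
    factorProj P (fun y => f y - g y) x = factorProj P f x - factorProj P g x := by
  simp only [factorProj, sum_sub_distrib, mul_sub]

namespace IsFactor

variable {T : Finset α} {P Q : α → Finset α}

theorem mem_comm (hP : IsFactor T P) {x y : α} (hx : x ∈ T) (hy : y ∈ P x) : x ∈ P y := by
  rw [hP.eq_of_mem x hx y hy]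
  exact hP.mem_self x hx

theorem sum_sum_comm {M : Type*} [AddCommMonoid M] (hP : IsFactor T P) (F : α → α → M) :
    ∑ x ∈ T, ∑ y ∈ P x, F x y = ∑ y ∈ T, ∑ x ∈ P y, F x y :=
  sum_comm' fun x y =>
    ⟨fun ⟨hx, hy⟩ => ⟨hP.mem_comm hx hy, hP.subset x hx hy⟩,
      fun ⟨hx, hy⟩ => ⟨hP.subset y hy hx, hP.mem_comm hy hx⟩⟩

theorem factorProj_eq_of_mem (hP : IsFactor T P) (f : α → ℝ) {x y : α} (hx : x ∈ T)
    (hy : y ∈ P x) : factorProj P f y = factorProj P f x := by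
  simp only [factorProj, hP.eq_of_mem x hx y hy]

theorem sum_factorProj (hP : IsFactor T P) (g : α → ℝ) :
    ∑ x ∈ T, factorProj P g x = ∑ x ∈ T, g x := by
  calc ∑ x ∈ T, factorProj P g x
      = ∑ x ∈ T, ∑ y ∈ P x, ((P x).card : ℝ)⁻¹ * g y := by simp only [factorProj, mul_sum]
    _ = ∑ y ∈ T, ∑ x ∈ P y, ((P x).card : ℝ)⁻¹ * g y := hP.sum_sum_comm _
    _ = ∑ y ∈ T, ∑ x ∈ P y, ((P y).card : ℝ)⁻¹ * g y :=
        sum_congr rfl fun y hy => sum_congr rfl fun x hx => by rw [hP.eq_of_mem y hy x hx]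
    _ = ∑ y ∈ T, g y := by
        refine sum_congr rfl fun y hy => ?_
        have hcard : ((P y).card : ℝ) ≠ 0 := by
          exact_mod_cast (card_ne_zero_of_mem (hP.mem_self y hy))
        rw [sum_const, nsmul_eq_mul, ← mul_assoc, mul_inv_cancel₀ hcard, one_mul]

theorem inf [DecidableEq α] {B C : α → Finset α} (hB : IsFactor T B) (hC : IsFactor T C) :
    IsFactor T (fun x => B x ∩ C x) where
  mem_self x hx := mem_inter.mpr ⟨hB.mem_self x hx, hC.mem_self x hx⟩
  subset x hx := inter_subset_left.trans (hB.subset x hx)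
  eq_of_mem x hx y hy := by
    rw [hB.eq_of_mem x hx y (mem_inter.mp hy).1, hC.eq_of_mem x hx y (mem_inter.mp hy).2]

theorem restrict (hP : IsFactor T P) (hQ : IsFactor T Q) (hQP : ∀ x ∈ T, Q x ⊆ P x) {x : α}
    (hx : x ∈ T) : IsFactor (P x) Q where
  mem_self y hy := hQ.mem_self y (hP.subset x hx hy)
  subset y hy := by
    simpa only [hP.eq_of_mem x hx y hy] using hQP y (hP.subset x hx hy)
  eq_of_mem y hy := hQ.eq_of_mem y (hP.subset x hx hy)

theorem factorProj_factorProj_of_le (hP : IsFactor T P) (hQ : IsFactor T Q)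
    (hQP : ∀ x ∈ T, Q x ⊆ P x) (f : α → ℝ) {x : α} (hx : x ∈ T) :
    factorProj P (factorProj Q f) x = factorProj P f x := by
  rw [factorProj, (hP.restrict hQ hQP hx).sum_factorProj, factorProj]

theorem factorProj_mul_of_le (hP : IsFactor T P) (hQP : ∀ x ∈ T, Q x ⊆ P x) (f g : α → ℝ)
    {x : α} (hx : x ∈ T) :
    factorProj Q (fun y => factorProj P f y * g y) x = factorProj P f x * factorProj Q g x := by
  have hconst : ∀ y ∈ Q x, factorProj P f y * g y = factorProj P f x * g y := fun y hy => by
    rw [hP.factorProj_eq_of_mem f hx (hQP x hx hy)]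
  change ((Q x).card : ℝ)⁻¹ * ∑ y ∈ Q x, factorProj P f y * g y =
    factorProj P f x * (((Q x).card : ℝ)⁻¹ * ∑ y ∈ Q x, g y)
  rw [sum_congr rfl hconst, ← mul_sum]
  ring

theorem sum_factorProj_mul_factorProj_of_le (hP : IsFactor T P) (hQ : IsFactor T Q)
    (hQP : ∀ x ∈ T, Q x ⊆ P x) (f : α → ℝ) :
    ∑ x ∈ T, factorProj P f x * factorProj Q f x = ∑ x ∈ T, factorProj P f x * f x := by
  calc ∑ x ∈ T, factorProj P f x * factorProj Q f x
      = ∑ x ∈ T, factorProj Q (fun y => factorProj P f y * f y) x :=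
        sum_congr rfl fun x hx => (hP.factorProj_mul_of_le hQP f f hx).symm
    _ = ∑ x ∈ T, factorProj P f x * f x := hQ.sum_factorProj _

theorem sum_sq_factorProj_sub (hP : IsFactor T P) (hQ : IsFactor T Q)
    (hQP : ∀ x ∈ T, Q x ⊆ P x) (f : α → ℝ) :
    ∑ x ∈ T, (factorProj Q f x - factorProj P f x) ^ 2 =
      ∑ x ∈ T, factorProj Q f x ^ 2 - ∑ x ∈ T, factorProj P f x ^ 2 := by
  have hcross :
      ∑ x ∈ T, factorProj P f x * factorProj Q f x = ∑ x ∈ T, factorProj P f x ^ 2 := by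
    rw [hP.sum_factorProj_mul_factorProj_of_le hQ hQP f,
      ← hP.sum_factorProj_mul_factorProj_of_le hP (fun _ _ => subset_rfl) f]
    simp only [sq]
  have hexpand : ∀ x ∈ T, (factorProj Q f x - factorProj P f x) ^ 2 =
      factorProj Q f x ^ 2 - 2 * (factorProj P f x * factorProj Q f x) +
        factorProj P f x ^ 2 := fun x _ => by ring
  rw [sum_congr rfl hexpand, sum_add_distrib, sum_sub_distrib, ← mul_sum, hcross]
  ring

theorem sum_sq_factorProj_le (hP : IsFactor T P) (hQ : IsFactor T Q)
    (hQP : ∀ x ∈ T, Q x ⊆ P x) (f : α → ℝ) :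
    ∑ x ∈ T, factorProj P f x ^ 2 ≤ ∑ x ∈ T, factorProj Q f x ^ 2 := by
  have hnonneg : 0 ≤ ∑ x ∈ T, (factorProj Q f x - factorProj P f x) ^ 2 :=
    sum_nonneg fun _ _ => sq_nonneg _
  linarith [hP.sum_sq_factorProj_sub hQ hQP f]

theorem sum_abs_factorProj_le (hP : IsFactor T P) (g : α → ℝ) :
    ∑ x ∈ T, |factorProj P g x| ≤ ∑ x ∈ T, |g x| := by
  calc ∑ x ∈ T, |factorProj P g x|
      ≤ ∑ x ∈ T, factorProj P (fun y => |g y|) x := by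
        refine sum_le_sum fun x _ => ?_
        rw [factorProj, factorProj, abs_mul, abs_inv, Nat.abs_cast]
        gcongr
        exact abs_sum_le_sum_abs _ _
    _ = ∑ x ∈ T, |g x| := hP.sum_factorProj _

end IsFactor

theorem projection_pythagoras_general (N : ℕ) (B C : ℕ → Finset ℕ)
    (hBmem : ∀ x ∈ Finset.Icc 1 N, x ∈ B x)
    (hBsub : ∀ x ∈ Finset.Icc 1 N, B x ⊆ Finset.Icc 1 N)
    (hBeq : ∀ x ∈ Finset.Icc 1 N, ∀ y ∈ B x, B y = B x)
    (hCmem : ∀ x ∈ Finset.Icc 1 N, x ∈ C x)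
    (hCsub : ∀ x ∈ Finset.Icc 1 N, C x ⊆ Finset.Icc 1 N)
    (hCeq : ∀ x ∈ Finset.Icc 1 N, ∀ y ∈ C x, C y = C x)
    (f : ℕ → ℝ) :
    ((N : ℝ)⁻¹ * ∑ n ∈ Finset.Icc 1 N,
        |((C n).card : ℝ)⁻¹ * ∑ y ∈ C n,
          (f y - ((B y).card : ℝ)⁻¹ * ∑ z ∈ B y, f z)|)
      ≤ Real.sqrt
          (((N : ℝ)⁻¹ * ∑ n ∈ Finset.Icc 1 N,
              (((B n ∩ C n).card : ℝ)⁻¹ * ∑ y ∈ B n ∩ C n, f y) ^ 2) -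
            ((N : ℝ)⁻¹ * ∑ n ∈ Finset.Icc 1 N,
              (((B n).card : ℝ)⁻¹ * ∑ y ∈ B n, f y) ^ 2)) ∧
    ((N : ℝ)⁻¹ * ∑ n ∈ Finset.Icc 1 N,
        (((B n).card : ℝ)⁻¹ * ∑ y ∈ B n, f y) ^ 2)
      ≤ ((N : ℝ)⁻¹ * ∑ n ∈ Finset.Icc 1 N,
          (((B n ∩ C n).card : ℝ)⁻¹ * ∑ y ∈ B n ∩ C n, f y) ^ 2) := by
  set T := Finset.Icc 1 N
  set J : ℕ → Finset ℕ := fun x => B x ∩ C x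
  have hB : IsFactor T B := ⟨hBmem, hBsub, hBeq⟩
  have hC : IsFactor T C := ⟨hCmem, hCsub, hCeq⟩
  have hJ : IsFactor T J := hB.inf hC
  have hJB : ∀ x ∈ T, J x ⊆ B x := fun _ _ => inter_subset_left
  have hJC : ∀ x ∈ T, J x ⊆ C x := fun _ _ => inter_subset_right
  have hcard : (N : ℝ) = (#T : ℝ) := by simp [T]
  change (N : ℝ)⁻¹ * ∑ n ∈ T, |factorProj C (fun y => f y - factorProj B f y) n|
      ≤ √((N : ℝ)⁻¹ * ∑ n ∈ T, factorProj J f n ^ 2 -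
          (N : ℝ)⁻¹ * ∑ n ∈ T, factorProj B f n ^ 2) ∧
    (N : ℝ)⁻¹ * ∑ n ∈ T, factorProj B f n ^ 2 ≤ (N : ℝ)⁻¹ * ∑ n ∈ T, factorProj J f n ^ 2
  have hL1 : ∑ n ∈ T, |factorProj C (fun y => f y - factorProj B f y) n|
      ≤ ∑ n ∈ T, |factorProj J f n - factorProj B f n| := by
    calc _ = ∑ n ∈ T, |factorProj C (fun y => factorProj J f y - factorProj B f y) n| :=
          sum_congr rfl fun n hn => by
            rw [factorProj_sub, factorProj_sub, hC.factorProj_factorProj_of_le hJ hJC f hn]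
      _ ≤ _ := hC.sum_abs_factorProj_le _
  refine ⟨?_, mul_le_mul_of_nonneg_left (hB.sum_sq_factorProj_le hJ hJB f) (by positivity)⟩
  calc _ ≤ (N : ℝ)⁻¹ * ∑ n ∈ T, |factorProj J f n - factorProj B f n| := by gcongr
    _ ≤ √((N : ℝ)⁻¹ * ∑ n ∈ T, (factorProj J f n - factorProj B f n) ^ 2) := by
        rw [hcard]; exact T.mean_abs_le_sqrt_mean_sq _
    _ = _ := by rw [hB.sum_sq_factorProj_sub hJ hJB f, mul_sub]

/-- **Pythagoras-type bound for projections onto factors.**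
Let `B` and `C` be factors (partitions) of `[N] = {1,…,N}`, encoded by assigning to each
`x ∈ [N]` its part (`B x` is the part of `B` containing `x`, and similarly for `C`);
the join `B ∨ C` then assigns to `x` the part `B x ∩ C x`. For any `f : [N] → ℝ`,
`‖Π_C(f − Π_B f)‖_{L¹[N]} ≤ (‖Π_{B∨C} f‖²_{L²[N]} − ‖Π_B f‖²_{L²[N]})^{1/2}`;
in particular `‖Π_{B∨C} f‖²_{L²[N]} ≥ ‖Π_B f‖²_{L²[N]}`. Here
`Π_B f(x) = E_{y ∈ B(x)} f(y)`, `‖f‖_{L¹[N]} = E_{n∈[N]}|f(n)|` and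
`‖f‖²_{L²[N]} = E_{n∈[N]}|f(n)|²`. -/
theorem projection_pythagoras (N : ℕ) (hN : 1 ≤ N) (B C : ℕ → Finset ℕ)
    (hBmem : ∀ x ∈ Finset.Icc 1 N, x ∈ B x)
    (hBsub : ∀ x ∈ Finset.Icc 1 N, B x ⊆ Finset.Icc 1 N)
    (hBeq : ∀ x ∈ Finset.Icc 1 N, ∀ y ∈ B x, B y = B x)
    (hCmem : ∀ x ∈ Finset.Icc 1 N, x ∈ C x)
    (hCsub : ∀ x ∈ Finset.Icc 1 N, C x ⊆ Finset.Icc 1 N)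
    (hCeq : ∀ x ∈ Finset.Icc 1 N, ∀ y ∈ C x, C y = C x)
    (f : ℕ → ℝ) :
    ((N : ℝ)⁻¹ * ∑ n ∈ Finset.Icc 1 N,
        |((C n).card : ℝ)⁻¹ * ∑ y ∈ C n,
          (f y - ((B y).card : ℝ)⁻¹ * ∑ z ∈ B y, f z)|)
      ≤ Real.sqrt
          (((N : ℝ)⁻¹ * ∑ n ∈ Finset.Icc 1 N,
              (((B n ∩ C n).card : ℝ)⁻¹ * ∑ y ∈ B n ∩ C n, f y) ^ 2) -
            ((N : ℝ)⁻¹ * ∑ n ∈ Finset.Icc 1 N,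
              (((B n).card : ℝ)⁻¹ * ∑ y ∈ B n, f y) ^ 2)) ∧
    ((N : ℝ)⁻¹ * ∑ n ∈ Finset.Icc 1 N,
        (((B n).card : ℝ)⁻¹ * ∑ y ∈ B n, f y) ^ 2)
      ≤ ((N : ℝ)⁻¹ * ∑ n ∈ Finset.Icc 1 N,
          (((B n ∩ C n).card : ℝ)⁻¹ * ∑ y ∈ B n ∩ C n, f y) ^ 2) :=
  projection_pythagoras_general N B C hBmem hBsub hBeq hCmem hCsub hCeq f
end

section
/- Fix an integer k ≥ 2 and a constant c ∈ (0,1], and set c' = min(c,1)/(10k)^5. Let N ≥ 1, let h : [N] → [0,1] satisfy E_{n∈[N]} h(n) = δ > 0, and suppose |Λ_k(h) − Λ_k(δ·1_{[N]})| ≥ c·δ^k/2. Then (1/N)·|{n ∈ [N] : h(n) > (1+c')·δ}| ≥ c·δ^k/(20k). -/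
open Finset

/-- The `k`-term arithmetic progression counting operator with a single real function:
`Λ_k(f) = E_{x,y ∈ {0,…,N}} ∏_{j=1}^k f(x + (j−1)y)`, where `f : ℕ → ℝ` represents a
function on `[N] = {1,…,N}` extended by `0` outside `[N]`. -/
noncomputable def lambdaR (k N : ℕ) (f : ℕ → ℝ) : ℝ :=
  (((N : ℝ) + 1) ^ 2)⁻¹ *
    ∑ x ∈ Finset.range (N + 1), ∑ y ∈ Finset.range (N + 1),
      ∏ j : Fin k,
        (if x + (j : ℕ) * y ∈ Finset.Icc 1 N then f (x + (j : ℕ) * y) else 0)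

/-!
Truncate `h` at the level `T = (1 + c')δ`, i.e. put `g = min h T`. Telescoping the product
shows that `Λ_k` is Lipschitz for the `ℓ¹` norm on functions bounded by `M`, with constant
`k M^(k-1) / (N + 1)`. Since `0 ≤ h - g ≤ 1_Ω` for the level set `Ω`, `Λ_k(h)` and `Λ_k(g)`
differ by at most `k |Ω| / N`. Since `g ≤ T` and the mean of `g` is at least `δ - |Ω| / N`,
`g` is within `2(T - δ) + |Ω| / N` of `δ` in mean absolute deviation, so `Λ_k(g)` and `Λ_k(δ)`
differ by at most `k T^(k-1) (2c'δ + |Ω| / N)`, where `T^(k-1) ≤ 3δ^(k-1)` because `c'` is tiny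
compared with `1/k`. Against the discrepancy `cδ^k / 2` this forces `|Ω| / N ≥ cδ^k / (20k)`.
-/
theorem abs_prod_sub_prod_le {ι : Type*} (s : Finset ι) {F G : ι → ℝ} {M : ℝ}
    (hF : ∀ i ∈ s, |F i| ≤ M) (hG : ∀ i ∈ s, |G i| ≤ M) :
    |∏ i ∈ s, F i - ∏ i ∈ s, G i| ≤ M ^ (#s - 1) * ∑ i ∈ s, |F i - G i| := by
  classical
  induction s using Finset.induction_on with
  | empty => simp
  | insert a s ha ih =>
    rw [Finset.forall_mem_insert] at hF hG
    have hM : 0 ≤ M := (abs_nonneg _).trans hG.1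
    have hprod : |∏ i ∈ s, F i| ≤ M ^ #s := by
      rw [Finset.abs_prod, ← Finset.prod_const]
      exact Finset.prod_le_prod (fun i _ => abs_nonneg _) hF.2
    have htail : |G a| * |∏ i ∈ s, F i - ∏ i ∈ s, G i|
        ≤ M ^ #s * ∑ i ∈ s, |F i - G i| := by
      rcases s.eq_empty_or_nonempty with rfl | hs
      · simp
      · rw [← Nat.sub_add_cancel hs.card_pos, pow_succ', mul_assoc]
        exact mul_le_mul hG.1 (ih hF.2 hG.2) (abs_nonneg _) hM
    rw [Finset.prod_insert ha, Finset.prod_insert ha, Finset.sum_insert ha,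
      Finset.card_insert_of_notMem ha, Nat.add_sub_cancel, mul_add]
    calc |F a * ∏ i ∈ s, F i - G a * ∏ i ∈ s, G i|
        = |(F a - G a) * ∏ i ∈ s, F i + G a * (∏ i ∈ s, F i - ∏ i ∈ s, G i)| := by
          ring_nf
      _ ≤ |F a - G a| * |∏ i ∈ s, F i| + |G a| * |∏ i ∈ s, F i - ∏ i ∈ s, G i| := by
        rw [← abs_mul, ← abs_mul]; exact abs_add_le _ _
      _ ≤ M ^ #s * |F a - G a| + M ^ #s * ∑ i ∈ s, |F i - G i| := by
        rw [mul_comm (M ^ #s)]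
        exact add_le_add (mul_le_mul_of_nonneg_left hprod (abs_nonneg _)) htail

theorem sum_indicator_le_sum {ι : Type*} {s : Finset ι} {u : ι → ℝ}
    (hu : ∀ i ∈ s, 0 ≤ u i) (t : Finset ι) :
    ∑ i ∈ t, (s : Set ι).indicator u i ≤ ∑ i ∈ s, u i := by
  classical
  rw [← Finset.sum_indicator_subset u (Finset.subset_union_right (s₁ := t))]
  exact Finset.sum_le_sum_of_subset_of_nonneg Finset.subset_union_left
    fun i _ _ => Set.indicator_nonneg (fun j hj => hu j hj) i

theorem abs_sub_le_two_mul_add_sub {a m T : ℝ} (ha : a ≤ T) (hm : m ≤ T) :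
    |a - m| ≤ 2 * (T - m) + (m - a) := by
  rw [abs_le]; constructor <;> linarith

theorem sum_abs_sub_min_le_card_filter {ι : Type*} (s : Finset ι) {h : ι → ℝ} {T : ℝ}
    (hT : 0 ≤ T) (h1 : ∀ i ∈ s, h i ≤ 1) :
    ∑ i ∈ s, |h i - min (h i) T| ≤ #{i ∈ s | T < h i} := by
  classical
  rw [← Finset.sum_boole]
  refine Finset.sum_le_sum fun i hi => ?_
  split_ifs with hTi
  · rw [min_eq_right hTi.le, abs_of_pos (sub_pos.2 hTi)]
    linarith [h1 i hi]
  · rw [min_eq_left (not_lt.1 hTi), sub_self, abs_zero]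

theorem one_add_pow_le_three {x : ℝ} {n : ℕ} (hx : 0 ≤ x) (hnx : n * x ≤ 1) :
    (1 + x) ^ n ≤ 3 := by
  calc (1 + x) ^ n ≤ Real.exp x ^ n := by
        gcongr; linarith [Real.add_one_le_exp x]
    _ = Real.exp (n * x) := (Real.exp_nat_mul x n).symm
    _ ≤ Real.exp 1 := Real.exp_le_exp.2 hnx
    _ ≤ 3 := Real.exp_one_lt_three.le

theorem hundred_mul_le_ten_mul_pow_five {x : ℝ} (hx : 1 ≤ x) : 100 * x ≤ (10 * x) ^ 5 := by
  nlinarith [pow_le_pow_right₀ (by linarith : (1 : ℝ) ≤ 10 * x) (by norm_num : 2 ≤ 5)]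

theorem lambdaR_eq_indicator (k N : ℕ) (f : ℕ → ℝ) :
    lambdaR k N f = (((N : ℝ) + 1) ^ 2)⁻¹ *
      ∑ x ∈ range (N + 1), ∑ y ∈ range (N + 1),
        ∏ j : Fin k, (Icc 1 N : Set ℕ).indicator f (x + j * y) := by
  simp only [lambdaR, Set.indicator_apply, Finset.mem_coe]

theorem abs_lambdaR_sub_le (k N : ℕ) {f g : ℕ → ℝ} {M : ℝ} (hM : 0 ≤ M)
    (hf : ∀ n ∈ Icc 1 N, |f n| ≤ M) (hg : ∀ n ∈ Icc 1 N, |g n| ≤ M) :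
    |lambdaR k N f - lambdaR k N g| ≤
      k * M ^ (k - 1) * (((N : ℝ) + 1)⁻¹ * ∑ n ∈ Icc 1 N, |f n - g n|) := by
  set I : Set ℕ := ((Icc 1 N : Finset ℕ) : Set ℕ)
  set S := ∑ n ∈ Icc 1 N, |f n - g n|
  have hbound :
      ∀ φ : ℕ → ℝ, (∀ n ∈ Icc 1 N, |φ n| ≤ M) → ∀ n, |I.indicator φ n| ≤ M := by
    intro φ hφ n
    by_cases hn : n ∈ I
    · rw [Set.indicator_of_mem hn]; exact hφ n hn
    · rw [Set.indicator_of_notMem hn, abs_zero]; exact hM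
  have hdiff : ∀ n,
      |I.indicator f n - I.indicator g n| = I.indicator (fun n => |f n - g n|) n := by
    intro n
    by_cases hn : n ∈ I
    · simp only [Set.indicator_of_mem hn]
    · simp only [Set.indicator_of_notMem hn, sub_zero, abs_zero]
  have hline : ∀ y : ℕ, ∀ j : Fin k,
      ∑ x ∈ range (N + 1), I.indicator (fun n => |f n - g n|) (x + j * y) ≤ S := by
    intro y j
    have := sum_indicator_le_sum (s := Icc 1 N) (fun n _ => abs_nonneg (f n - g n))
      ((range (N + 1)).map (addRightEmbedding (j * y)))
    rwa [Finset.sum_map] at this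
  rw [lambdaR_eq_indicator, lambdaR_eq_indicator, ← mul_sub, abs_mul,
    abs_of_pos (by positivity)]
  calc (((N : ℝ) + 1) ^ 2)⁻¹ * |∑ x ∈ range (N + 1), ∑ y ∈ range (N + 1),
          ∏ j : Fin k, I.indicator f (x + j * y) -
        ∑ x ∈ range (N + 1), ∑ y ∈ range (N + 1), ∏ j : Fin k, I.indicator g (x + j * y)|
      ≤ (((N : ℝ) + 1) ^ 2)⁻¹ * ∑ x ∈ range (N + 1), ∑ y ∈ range (N + 1),
          M ^ (k - 1) * ∑ j : Fin k, I.indicator (fun n => |f n - g n|) (x + j * y) := by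
        gcongr
        simp only [← Finset.sum_sub_distrib]
        refine (Finset.abs_sum_le_sum_abs _ _).trans (Finset.sum_le_sum fun x _ => ?_)
        refine (Finset.abs_sum_le_sum_abs _ _).trans (Finset.sum_le_sum fun y _ => ?_)
        have := abs_prod_sub_prod_le (univ : Finset (Fin k))
          (fun j _ => hbound f hf (x + j * y)) (fun j _ => hbound g hg (x + j * y))
        simpa only [card_univ, Fintype.card_fin, hdiff] using this
    _ = (((N : ℝ) + 1) ^ 2)⁻¹ * M ^ (k - 1) * ∑ j : Fin k, ∑ y ∈ range (N + 1),
          ∑ x ∈ range (N + 1), I.indicator (fun n => |f n - g n|) (x + j * y) := by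
        simp only [← Finset.mul_sum, mul_assoc]
        rw [Finset.sum_comm]
        exact congrArg _ (congrArg _
          ((Finset.sum_congr rfl fun y _ => Finset.sum_comm).trans Finset.sum_comm))
    _ ≤ (((N : ℝ) + 1) ^ 2)⁻¹ * M ^ (k - 1) * ∑ j : Fin k, ∑ y ∈ range (N + 1), S := by
        gcongr with j _ y _
        exact hline y j
    _ = k * M ^ (k - 1) * (((N : ℝ) + 1)⁻¹ * S) := by
        simp only [sum_const, card_univ, Fintype.card_fin, card_range, nsmul_eq_mul]
        push_cast
        field_simp

theorem abs_lambdaR_sub_lambdaR_min_le (k N : ℕ) {h : ℕ → ℝ} {T : ℝ} (hT : 0 ≤ T)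
    (hh : ∀ n ∈ Icc 1 N, h n ∈ Set.Icc (0 : ℝ) 1) :
    |lambdaR k N h - lambdaR k N (fun n => min (h n) T)| ≤
      k * (((N : ℝ) + 1)⁻¹ * #{n ∈ Icc 1 N | T < h n}) := by
  have hbound := abs_lambdaR_sub_le k N (f := h) (g := fun n => min (h n) T) zero_le_one
    (fun n hn => abs_le.2 ⟨by linarith [(hh n hn).1], (hh n hn).2⟩)
    (fun n hn => abs_le.2 ⟨by linarith [le_min (hh n hn).1 hT],
      (min_le_left _ _).trans (hh n hn).2⟩)
  rw [one_pow, mul_one] at hbound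
  refine hbound.trans (mul_le_mul_of_nonneg_left (mul_le_mul_of_nonneg_left ?_ ?_) ?_)
  · exact sum_abs_sub_min_le_card_filter _ hT fun n hn => (hh n hn).2
  all_goals positivity

theorem abs_lambdaR_min_sub_lambdaR_const_le (k N : ℕ) {h : ℕ → ℝ} {δ T : ℝ}
    (hδ : 0 ≤ δ) (hδT : δ ≤ T) (hh : ∀ n ∈ Icc 1 N, h n ∈ Set.Icc (0 : ℝ) 1)
    (hsum : ∑ n ∈ Icc 1 N, h n = N * δ) :
    |lambdaR k N (fun n => min (h n) T) - lambdaR k N (fun _ => δ)| ≤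
      k * T ^ (k - 1) * (2 * (T - δ) + ((N : ℝ) + 1)⁻¹ * #{n ∈ Icc 1 N | T < h n}) := by
  have hT : 0 ≤ T := hδ.trans hδT
  set g : ℕ → ℝ := fun n => min (h n) T
  have hbound := abs_lambdaR_sub_le k N (f := g) (g := fun _ => δ) hT
    (fun n hn => by rw [abs_of_nonneg (le_min (hh n hn).1 hT)]; exact min_le_right _ _)
    (fun n _ => by rwa [abs_of_nonneg hδ])
  have hdeficit : ∑ n ∈ Icc 1 N, (δ - g n) ≤ #{n ∈ Icc 1 N | T < h n} := by
    calc ∑ n ∈ Icc 1 N, (δ - g n) = ∑ n ∈ Icc 1 N, (h n - g n) := by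
          simp only [Finset.sum_sub_distrib, hsum, sum_const, Nat.card_Icc, nsmul_eq_mul]
          simp
      _ ≤ ∑ n ∈ Icc 1 N, |h n - g n| := Finset.sum_le_sum fun n _ => le_abs_self _
      _ ≤ _ := sum_abs_sub_min_le_card_filter _ hT fun n hn => (hh n hn).2
  have hsum_abs :
      ∑ n ∈ Icc 1 N, |g n - δ| ≤ N * (2 * (T - δ)) + #{n ∈ Icc 1 N | T < h n} := by
    calc ∑ n ∈ Icc 1 N, |g n - δ| ≤ ∑ n ∈ Icc 1 N, (2 * (T - δ) + (δ - g n)) :=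
          Finset.sum_le_sum fun n _ => abs_sub_le_two_mul_add_sub (min_le_right _ _) hδT
      _ ≤ _ := by
          rw [Finset.sum_add_distrib, sum_const, Nat.card_Icc, nsmul_eq_mul]
          simpa using hdeficit
  refine hbound.trans (mul_le_mul_of_nonneg_left ?_ (by positivity))
  have hN : (N : ℝ) / (N + 1) ≤ 1 := by rw [div_le_one (by positivity)]; linarith
  calc ((N : ℝ) + 1)⁻¹ * ∑ n ∈ Icc 1 N, |g n - δ|
      ≤ ((N : ℝ) + 1)⁻¹ * (N * (2 * (T - δ)) + #{n ∈ Icc 1 N | T < h n}) := by gcongr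
    _ = N / (N + 1) * (2 * (T - δ)) + ((N : ℝ) + 1)⁻¹ * #{n ∈ Icc 1 N | T < h n} := by ring
    _ ≤ _ := by
        have := mul_le_of_le_one_left (b := 2 * (T - δ)) (by linarith) hN
        linarith

theorem le_of_discrepancy_le_truncation_bound {k : ℕ} {c c' δ w : ℝ} (hk : 1 ≤ k)
    (hδ : 0 ≤ δ) (hδ1 : δ ≤ 1) (hc' : 0 ≤ c') (hc'c : 100 * k * c' ≤ c)
    (hc'1 : 100 * k * c' ≤ 1) (hw : 0 ≤ w)
    (hdisc : c * δ ^ k / 2 ≤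
      k * w + k * ((1 + c') * δ) ^ (k - 1) * (2 * ((1 + c') * δ - δ) + w)) :
    c * δ ^ k / (20 * k) ≤ w := by
  have hk0 : (0 : ℝ) < k := by exact_mod_cast hk
  have hq : (1 + c') ^ (k - 1) ≤ 3 := by
    refine one_add_pow_le_three hc' ?_
    have : ((k - 1 : ℕ) : ℝ) ≤ k := by exact_mod_cast Nat.sub_le k 1
    nlinarith
  have hP1 : δ ^ (k - 1) ≤ 1 := pow_le_one₀ hδ hδ1
  have hPδ : δ ^ (k - 1) * δ = δ ^ k := pow_sub_one_mul (by omega) δ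
  have herror : k * ((1 + c') * δ) ^ (k - 1) * (2 * ((1 + c') * δ - δ) + w)
      ≤ 6 * (k * c') * δ ^ k + 3 * (k * w) := by
    have hterm : 0 ≤ 2 * ((1 + c') * δ - δ) + w := by nlinarith
    calc k * ((1 + c') * δ) ^ (k - 1) * (2 * ((1 + c') * δ - δ) + w)
        = k * (1 + c') ^ (k - 1) * δ ^ (k - 1) * (2 * ((1 + c') * δ - δ) + w) := by
          rw [mul_pow]; ring
      _ ≤ k * 3 * δ ^ (k - 1) * (2 * ((1 + c') * δ - δ) + w) := by gcongr
      _ = 6 * (k * c') * (δ ^ (k - 1) * δ) + 3 * (k * w) * δ ^ (k - 1) := by ring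
      _ ≤ 6 * (k * c') * δ ^ k + 3 * (k * w) := by
          rw [hPδ]
          have := mul_le_of_le_one_right (a := 3 * (k * w)) (by positivity) hP1
          linarith
  have hδk : 6 * (k * c') * δ ^ k ≤ 6 / 100 * (c * δ ^ k) := by
    have := pow_nonneg hδ k
    nlinarith
  rw [div_le_iff₀ (by positivity)]
  nlinarith

theorem large_level_set_of_discrepancy_general (k : ℕ) (hk : 2 ≤ k) (c : ℝ) (hc : 0 < c)
    (N : ℕ) (hN : 1 ≤ N) (h : ℕ → ℝ) (δ : ℝ)
    (hrange : ∀ n ∈ Finset.Icc 1 N, h n ∈ Set.Icc (0 : ℝ) 1)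
    (hmean : (N : ℝ)⁻¹ * ∑ n ∈ Finset.Icc 1 N, h n = δ) (hδ : 0 < δ)
    (hlam : c * δ ^ k / 2 ≤ |lambdaR k N h - lambdaR k N (fun _ => δ)|) :
    c * δ ^ k / (20 * k) ≤
      (1 / (N : ℝ)) *
        (((Finset.Icc 1 N).filter
          (fun n => (1 + min c 1 / (10 * (k : ℝ)) ^ 5) * δ < h n)).card : ℝ) := by
  set c' := min c 1 / (10 * (k : ℝ)) ^ 5
  have hN0 : (0 : ℝ) < N := by exact_mod_cast hN
  have hk1 : (1 : ℝ) ≤ k := by exact_mod_cast (by omega : 1 ≤ k)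
  have hc' : 0 ≤ c' := by positivity
  have h100 : 100 * k * c' ≤ min c 1 := by
    rw [mul_div_assoc', div_le_iff₀ (by positivity), mul_comm]
    exact mul_le_mul_of_nonneg_left (hundred_mul_le_ten_mul_pow_five hk1) (by positivity)
  have hsum : ∑ n ∈ Icc 1 N, h n = N * δ := by
    rw [← hmean, mul_inv_cancel_left₀ hN0.ne']
  have hδ1 : δ ≤ 1 := by
    have := Finset.sum_le_card_nsmul _ _ _ fun n hn => (hrange n hn).2
    rw [hsum, Nat.card_Icc, Nat.add_sub_cancel, nsmul_eq_mul, mul_one] at this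
    exact le_of_mul_le_mul_left (by linarith) hN0
  have hδT : δ ≤ (1 + c') * δ := by nlinarith
  have hdisc := hlam.trans ((abs_sub_le _ (lambdaR k N fun n => min (h n) ((1 + c') * δ)) _).trans
    (add_le_add (abs_lambdaR_sub_lambdaR_min_le k N (by positivity) hrange)
      (abs_lambdaR_min_sub_lambdaR_const_le k N hδ.le hδT hrange hsum)))
  refine (le_of_discrepancy_le_truncation_bound (by omega) hδ.le hδ1 hc'
    (h100.trans (min_le_left _ _)) (h100.trans (min_le_right _ _))
    (mul_nonneg (by positivity) (Nat.cast_nonneg _)) hdisc).trans ?_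
  rw [one_div]
  exact mul_le_mul_of_nonneg_right (inv_anti₀ hN0 (by linarith)) (Nat.cast_nonneg _)

/-- **Large level set from Λ_k-discrepancy (crucial claim in Lemma 3.8).**
Fix `k ≥ 2` and `c ∈ (0,1]`, and set `c' = min(c,1)/(10k)^5`. If `h : [N] → [0,1]`
has mean `δ > 0` and `|Λ_k(h) − Λ_k(δ·1_{[N]})| ≥ c·δ^k/2`, then the set
`Ω' = {n ∈ [N] : h(n) > (1+c')·δ}` has density at least `c·δ^k/(20k)` in `[N]`. -/
theorem large_level_set_of_discrepancy (k : ℕ) (hk : 2 ≤ k) (c : ℝ) (hc : 0 < c)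
    (hc1 : c ≤ 1) (N : ℕ) (hN : 1 ≤ N) (h : ℕ → ℝ) (δ : ℝ)
    (hrange : ∀ n ∈ Finset.Icc 1 N, h n ∈ Set.Icc (0 : ℝ) 1)
    (hmean : (N : ℝ)⁻¹ * ∑ n ∈ Finset.Icc 1 N, h n = δ) (hδ : 0 < δ)
    (hlam : c * δ ^ k / 2 ≤ |lambdaR k N h - lambdaR k N (fun _ => δ)|) :
    c * δ ^ k / (20 * k) ≤
      (1 / (N : ℝ)) *
        (((Finset.Icc 1 N).filter
          (fun n => (1 + min c 1 / (10 * (k : ℝ)) ^ 5) * δ < h n)).card : ℝ) :=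
  large_level_set_of_discrepancy_general k hk c hc N hN h δ hrange hmean hδ hlam
end
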